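/- Let w ∈ W be generic for the toric ideal I_V. Then there exists a nonnegative weight vector c ∈ ℝ^m_{≥0} such that in_w(I_V) = in_c(I_V). -/

import Mathlib

open Matrix MvPolynomial

/-- The toric ideal of `V`: kernel of `xⱼ ↦ t^{vⱼ}` into Laurent polynomials. -/
noncomputable def toricIdeal (K : Type*) [Field K] {n m : ℕ}
    (V : Matrix (Fin n) (Fin m) ℤ) : Ideal (MvPolynomial (Fin m) K) :=
  RingHom.ker (MvPolynomial.aeval
    (fun j => AddMonoidAlgebra.of' K (Fin n → ℤ) (fun i => V i j)) :
    MvPolynomial (Fin m) K →ₐ[K] AddMonoidAlgebra K (Fin n → ℤ))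

/-- The `w`-weight of an exponent vector `a`: `wᵀ a`. -/
noncomputable def wdeg {m : ℕ} (w : Fin m → ℝ) (a : Fin m →₀ ℕ) : ℝ :=
  ∑ i, w i * (a i : ℝ)

/-- The initial form `in_w(f)`: the sum of the terms of `f` of maximal `w`-weight. -/
noncomputable def initialForm {K : Type*} [Field K] {m : ℕ} (w : Fin m → ℝ)
    (f : MvPolynomial (Fin m) K) : MvPolynomial (Fin m) K :=
  ∑ a ∈ f.support.filter (fun a => ∀ b ∈ f.support, wdeg w b ≤ wdeg w a),
    MvPolynomial.monomial a (f.coeff a)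

/-- The initial ideal `in_w(I)`: the ideal generated by the initial forms of elements of `I`. -/
noncomputable def initialIdealW {K : Type*} [Field K] {m : ℕ} (w : Fin m → ℝ)
    (I : Ideal (MvPolynomial (Fin m) K)) : Ideal (MvPolynomial (Fin m) K) :=
  Ideal.span {g | ∃ f ∈ I, g = initialForm w f}

/-- A monomial ideal: an ideal generated by monomials. -/
def IsMonomialIdeal {K : Type*} [Field K] {m : ℕ}
    (J : Ideal (MvPolynomial (Fin m) K)) : Prop :=
  ∃ S : Set (Fin m →₀ ℕ),
    J = Ideal.span ((fun a => MvPolynomial.monomial a (1 : K)) '' S)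

/-- The cone `U = ker_ℝ(V) ∩ ℝᵐ_{≥0}`. -/
def coneU {n m : ℕ} (V : Matrix (Fin n) (Fin m) ℤ) : Set (Fin m → ℝ) :=
  {u | (V.map (Int.cast : ℤ → ℝ)) *ᵥ u = 0 ∧ ∀ i, 0 ≤ u i}

/-- The Gröbner region `W`: weight vectors whose linear functional is bounded below on `U`. -/
def coneW {n m : ℕ} (V : Matrix (Fin n) (Fin m) ℤ) : Set (Fin m → ℝ) :=
  {w | ∃ c : ℝ, ∀ u ∈ coneU V, c ≤ w ⬝ᵥ u}

/-!
Since the columns of `V` positively span `ℝⁿ`, `ker V` contains a strictly positive vector, and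
this makes the cone `im Vᵀ + ℝᵐ_{≥0}` closed. A weight `w ∈ W` is nonnegative on
`U = ker V ∩ ℝᵐ_{≥0}`, so by Farkas' lemma `Vᵀ l ≤ w` for some `l`, and `c = w - Vᵀ l ≥ 0`.
The toric ideal is homogeneous for the grading `deg xⱼ = vⱼ ∈ ℤⁿ`, and on a homogeneous polynomial
the weights `c` and `c + Vᵀ l = w` differ by the constant `lᵀ deg`, so they select the same
initial terms.
-/

open Pointwise
open scoped NNReal

section Farkas

variable {ι κ : Type*} [Fintype κ]

theorem exists_pos_mulVec_eq_zero (A : Matrix ι κ ℝ)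
    (hA : ∀ b, ∃ u : κ → ℝ, (∀ i, 0 ≤ u i) ∧ A *ᵥ u = b) :
    ∃ u₀ : κ → ℝ, (∀ i, 0 < u₀ i) ∧ A *ᵥ u₀ = 0 := by
  obtain ⟨u, hu, hAu⟩ := hA (-(A *ᵥ 1))
  exact ⟨u + 1, fun i => by simpa using add_pos_of_nonneg_of_pos (hu i) one_pos,
    by rw [mulVec_add, hAu, neg_add_cancel]⟩

theorem isClosed_coe_add_nonneg_of_dotProduct_eq_zero (S : Submodule ℝ (κ → ℝ))
    {u₀ : κ → ℝ} (hu₀ : ∀ i, 0 < u₀ i) (hS : ∀ s ∈ S, s ⬝ᵥ u₀ = 0) :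
    IsClosed ((S : Set (κ → ℝ)) + Set.Ici (0 : κ → ℝ)) := by
  refine isClosed_of_closure_subset fun x hx => ?_
  set M := x ⬝ᵥ u₀ + 1
  have hO : IsOpen {y : κ → ℝ | y ⬝ᵥ u₀ < M} :=
    isOpen_lt (by fun_prop) continuous_const
  -- Below the level `M` of the functional `· ⬝ᵥ u₀`, which vanishes on `S`, the orthant part is
  -- confined to a compact box.
  have hbox : ((S : Set (κ → ℝ)) + Set.Ici (0 : κ → ℝ)) ∩ {y | y ⬝ᵥ u₀ < M}
      ⊆ (S : Set (κ → ℝ)) + Set.Icc 0 (fun i => M / u₀ i) := by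
    rintro _ ⟨⟨s, hs, p, hp, rfl⟩, hlt⟩
    refine ⟨s, hs, p, ⟨hp, fun i => ?_⟩, rfl⟩
    have hp_lt : p ⬝ᵥ u₀ < M := by
      simpa [add_dotProduct, hS s hs] using hlt
    have hpi : p i * u₀ i ≤ p ⬝ᵥ u₀ :=
      Finset.single_le_sum (f := fun j => p j * u₀ j)
        (fun j _ => mul_nonneg (hp j) (hu₀ j).le) (Finset.mem_univ i)
    rw [le_div_iff₀ (hu₀ i)]
    linarith
  have hclosed : IsClosed ((S : Set (κ → ℝ)) + Set.Icc 0 (fun i => M / u₀ i)) :=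
    S.closed_of_finiteDimensional.add_right_of_isCompact isCompact_Icc
  have hx' : x ∈ closure (((S : Set (κ → ℝ)) + Set.Ici (0 : κ → ℝ)) ∩ {y | y ⬝ᵥ u₀ < M}) :=
    hO.closure_inter ⟨hx, by simp [M]⟩
  obtain ⟨s, hs, p, hp, rfl⟩ := hclosed.closure_subset (closure_mono hbox hx')
  exact ⟨s, hs, p, hp.1, rfl⟩

theorem exists_vecMul_le_of_dotProduct_nonneg [Fintype ι] (A : Matrix ι κ ℝ) {u₀ : κ → ℝ}
    (hu₀ : ∀ i, 0 < u₀ i) (hAu₀ : A *ᵥ u₀ = 0) {w : κ → ℝ}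
    (hw : ∀ u, A *ᵥ u = 0 → 0 ≤ u → 0 ≤ w ⬝ᵥ u) :
    ∃ l : ι → ℝ, l ᵥ* A ≤ w := by
  classical
  let C : PointedCone ℝ (κ → ℝ) :=
    (LinearMap.range A.vecMulLinear).restrictScalars ℝ≥0 ⊔ PointedCone.positive ℝ (κ → ℝ)
  have hC : (C : Set (κ → ℝ)) = (LinearMap.range A.vecMulLinear : Set (κ → ℝ)) + Set.Ici 0 :=
    Submodule.coe_sup _ _
  have hclosed : IsClosed (C : Set (κ → ℝ)) := by
    rw [hC]
    refine isClosed_coe_add_nonneg_of_dotProduct_eq_zero _ hu₀ ?_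
    rintro _ ⟨l, rfl⟩
    simp [← Matrix.dotProduct_mulVec, hAu₀]
  by_contra! hno
  have hwC : w ∉ C := by
    rw [← SetLike.mem_coe, hC]
    rintro ⟨_, ⟨l, rfl⟩, p, hp, hwp⟩
    exact hno l (by simpa [← hwp] using hp)
  obtain ⟨f, hfC, hfw⟩ := ProperCone.hyperplane_separation_point ⟨C, hclosed⟩ hwC
  set y : κ → ℝ := fun i => f (Pi.single i 1)
  have hf : ∀ x, f x = x ⬝ᵥ y := fun x => by
    conv_lhs => rw [← Finset.univ_sum_single x]
    simp only [map_sum, dotProduct, y]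
    refine Finset.sum_congr rfl fun i _ => ?_
    rw [← smul_eq_mul, ← map_smul, ← Pi.single_smul', smul_eq_mul, mul_one]
  have hy : 0 ≤ y := fun i => hfC _ <| Submodule.mem_sup_right <| by
    simp [PointedCone.positive]
  have hrowC : ∀ l : ι → ℝ, l ᵥ* A ∈ C := fun l =>
    Submodule.mem_sup_left ⟨l, rfl⟩
  have hrow : ∀ l : ι → ℝ, f (l ᵥ* A) = 0 := fun l =>
    le_antisymm (by simpa [Matrix.neg_vecMul] using hfC _ (hrowC (-l))) (hfC _ (hrowC l))
  have hAy : A *ᵥ y = 0 := by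
    rw [← dotProduct_self_eq_zero, Matrix.dotProduct_mulVec, ← hf, hrow]
  exact hfw.not_ge (hf w ▸ hw y hAy hy)

end Farkas

theorem dotProduct_nonneg_of_mem_coneW {n m : ℕ} {V : Matrix (Fin n) (Fin m) ℤ}
    {w u : Fin m → ℝ} (hw : w ∈ coneW V) (hu : u ∈ coneU V) : 0 ≤ w ⬝ᵥ u := by
  obtain ⟨c, hc⟩ := hw
  have hsmul : ∀ t : ℝ, 0 ≤ t → t • u ∈ coneU V := fun t ht =>
    ⟨by rw [mulVec_smul, hu.1, smul_zero], fun i => mul_nonneg ht (hu.2 i)⟩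
  have hc₀ : c ≤ 0 := by simpa using hc _ (hsmul 0 le_rfl)
  by_contra! hneg
  have hscaled := hc _ (hsmul ((c - 1) / (w ⬝ᵥ u)) (div_nonneg_of_nonpos (by linarith) hneg.le))
  rw [dotProduct_smul, smul_eq_mul, div_mul_cancel₀ _ hneg.ne] at hscaled
  linarith

section InitialForms

variable {K : Type*} [Field K] {m : ℕ}

theorem wdeg_add (w w' : Fin m → ℝ) (a : Fin m →₀ ℕ) :
    wdeg (w + w') a = wdeg w a + wdeg w' a := by
  simp only [wdeg, Pi.add_apply, add_mul, Finset.sum_add_distrib]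

theorem wdeg_neg (w : Fin m → ℝ) (a : Fin m →₀ ℕ) : wdeg (-w) a = -wdeg w a := by
  simp only [wdeg, Pi.neg_apply, neg_mul, Finset.sum_neg_distrib]

theorem initialForm_add_of_wdeg_eq {w w' : Fin m → ℝ} {f : MvPolynomial (Fin m) K}
    (h : ∀ a ∈ f.support, ∀ b ∈ f.support, wdeg w' a = wdeg w' b) :
    initialForm (w + w') f = initialForm w f := by
  unfold initialForm
  congr 1
  refine Finset.filter_congr fun a ha => forall₂_congr fun b hb => ?_
  rw [wdeg_add, wdeg_add, h a ha b hb, add_le_add_iff_right]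

theorem initialForm_eq_sum_initialForm_weightedHomogeneousComponent {M : Type*}
    [AddCommMonoid M] [DecidableEq M] (G : Fin m → M) (w : Fin m → ℝ)
    (f : MvPolynomial (Fin m) K) :
    initialForm w f = ∑ d ∈ (f.support.filter fun a => ∀ b ∈ f.support, wdeg w b ≤ wdeg w a).image
      (Finsupp.weight G), initialForm w (weightedHomogeneousComponent G d f) := by
  set T := f.support.filter fun a => ∀ b ∈ f.support, wdeg w b ≤ wdeg w a
  have hcomponent : ∀ d ∈ T.image (Finsupp.weight G),
      initialForm w (weightedHomogeneousComponent G d f)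
        = ∑ a ∈ T with Finsupp.weight G a = d, monomial a (coeff a f) := by
    intro d hd
    obtain ⟨a₀, ha₀, rfl⟩ := Finset.mem_image.mp hd
    obtain ⟨ha₀f, ha₀max⟩ := Finset.mem_filter.mp ha₀
    rw [initialForm, support_weightedHomogeneousComponent]
    refine Finset.sum_congr ?_ fun a ha => ?_
    · ext a
      simp only [T, Finset.mem_filter]
      constructor
      · rintro ⟨⟨haf, hda⟩, hamax⟩
        exact ⟨⟨haf, fun b hb => (ha₀max b hb).trans (hamax a₀ ⟨ha₀f, rfl⟩)⟩, hda⟩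
      · rintro ⟨⟨haf, hamax⟩, hda⟩
        exact ⟨⟨haf, hda⟩, fun b hb => hamax b hb.1⟩
    · rw [coeff_weightedHomogeneousComponent, if_pos (Finset.mem_filter.mp ha).2]
  rw [Finset.sum_congr rfl hcomponent, initialForm]
  exact (Finset.sum_fiberwise_of_maps_to (fun a ha => Finset.mem_image_of_mem _ ha) _).symm

theorem initialIdealW_le_initialIdealW_add {M : Type*} [AddCommMonoid M]
    {I : Ideal (MvPolynomial (Fin m) K)} (G : Fin m → M)
    (hI : ∀ f ∈ I, ∀ d, weightedHomogeneousComponent G d f ∈ I) {w' : Fin m → ℝ}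
    (hw' : ∀ a b, Finsupp.weight G a = Finsupp.weight G b → wdeg w' a = wdeg w' b)
    (w : Fin m → ℝ) :
    initialIdealW w I ≤ initialIdealW (w + w') I := by
  classical
  rw [initialIdealW, Ideal.span_le]
  rintro _ ⟨f, hf, rfl⟩
  rw [initialForm_eq_sum_initialForm_weightedHomogeneousComponent G]
  refine Ideal.sum_mem _ fun d _ => ?_
  rw [← initialForm_add_of_wdeg_eq (w' := w') fun a ha b hb => hw' a b ?_]
  · exact Ideal.subset_span ⟨_, hI f hf d, rfl⟩
  · rw [weightedHomogeneousComponent_isWeightedHomogeneous d f (mem_support_iff.mp ha),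
      weightedHomogeneousComponent_isWeightedHomogeneous d f (mem_support_iff.mp hb)]

theorem initialIdealW_add_eq {M : Type*} [AddCommMonoid M]
    {I : Ideal (MvPolynomial (Fin m) K)} (G : Fin m → M)
    (hI : ∀ f ∈ I, ∀ d, weightedHomogeneousComponent G d f ∈ I) {w' : Fin m → ℝ}
    (hw' : ∀ a b, Finsupp.weight G a = Finsupp.weight G b → wdeg w' a = wdeg w' b)
    (w : Fin m → ℝ) :
    initialIdealW (w + w') I = initialIdealW w I := by
  refine le_antisymm ?_ (initialIdealW_le_initialIdealW_add G hI hw' w)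
  have hneg := initialIdealW_le_initialIdealW_add G hI (w' := -w')
    (fun a b hab => by rw [wdeg_neg, wdeg_neg, hw' a b hab]) (w + w')
  rwa [add_neg_cancel_right] at hneg

end InitialForms

section Toric

variable (K : Type*) [Field K] {n m : ℕ} (V : Matrix (Fin n) (Fin m) ℤ)

noncomputable abbrev toricMap : MvPolynomial (Fin m) K →ₐ[K] AddMonoidAlgebra K (Fin n → ℤ) :=
  aeval fun j => AddMonoidAlgebra.of' K (Fin n → ℤ) (fun i => V i j)

theorem toricIdeal_eq_ker : toricIdeal K V = RingHom.ker (toricMap K V) := rfl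

theorem toricMap_monomial (a : Fin m →₀ ℕ) (c : K) :
    toricMap K V (monomial a c)
      = AddMonoidAlgebra.single (Finsupp.weight (fun j i => V i j) a) c := by
  simp [aeval_monomial, Finsupp.prod, AddMonoidAlgebra.of'_apply, AddMonoidAlgebra.single_pow,
    AddMonoidAlgebra.prod_single, Finsupp.weight_apply, Finsupp.sum]

theorem toricMap_apply (f : MvPolynomial (Fin m) K) :
    toricMap K V f
      = ∑ a ∈ f.support, AddMonoidAlgebra.single (Finsupp.weight (fun j i => V i j) a) (coeff a f) := by
  conv_lhs => rw [f.as_sum]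
  simp only [map_sum, toricMap_monomial]

theorem toricMap_weightedHomogeneousComponent (f : MvPolynomial (Fin m) K) (d : Fin n → ℤ) :
    toricMap K V (weightedHomogeneousComponent (fun j i => V i j) d f)
      = AddMonoidAlgebra.single d ((toricMap K V f).coeff d) := by
  classical
  rw [weightedHomogeneousComponent_apply, map_sum, toricMap_apply]
  simp only [toricMap_monomial, AddMonoidAlgebra.coeff_sum, AddMonoidAlgebra.coeff_single,
    Finsupp.finsetSum_apply, Finsupp.single_apply, Finset.sum_ite, Finset.sum_const_zero, add_zero]
  exact (Finset.sum_congr rfl fun a ha => by rw [(Finset.mem_filter.mp ha).2]; rfl).trans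
    (map_sum (AddMonoidAlgebra.singleAddHom d) _ _).symm

theorem weightedHomogeneousComponent_mem_toricIdeal {f : MvPolynomial (Fin m) K}
    (hf : f ∈ toricIdeal K V) (d : Fin n → ℤ) :
    weightedHomogeneousComponent (fun j i => V i j) d f ∈ toricIdeal K V := by
  rw [toricIdeal_eq_ker, RingHom.mem_ker] at hf ⊢
  rw [toricMap_weightedHomogeneousComponent, hf]
  simp

theorem wdeg_vecMul_map_intCast (l : Fin n → ℝ) (a : Fin m →₀ ℕ) :
    wdeg (l ᵥ* V.map (Int.cast : ℤ → ℝ)) a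
      = l ⬝ᵥ fun k => (Finsupp.weight (fun j i => V i j) a k : ℝ) := by
  simp only [wdeg, vecMul, dotProduct, Finsupp.weight_eq_sum, Finset.sum_apply, Pi.smul_apply,
    map_apply, Int.cast_sum, Finset.sum_mul, Finset.mul_sum]
  rw [Finset.sum_comm]
  exact Finset.sum_congr rfl fun k _ => Finset.sum_congr rfl fun i _ => by
    push_cast [nsmul_eq_mul]
    ring

end Toric

theorem exists_nonneg_weight_same_initialIdeal_general
    (K : Type*) [Field K]
    (n m : ℕ) (V : Matrix (Fin n) (Fin m) ℤ)
    (hcomplete : ∀ b : Fin n → ℝ, ∃ u : Fin m → ℝ,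
      (∀ i, 0 ≤ u i) ∧ (V.map (Int.cast : ℤ → ℝ)) *ᵥ u = b)
    (w : Fin m → ℝ) (hw : w ∈ coneW V) :
    ∃ c : Fin m → ℝ, (∀ i, 0 ≤ c i) ∧
      initialIdealW w (toricIdeal K V) = initialIdealW c (toricIdeal K V) := by
  obtain ⟨u₀, hu₀, hVu₀⟩ := exists_pos_mulVec_eq_zero _ hcomplete
  obtain ⟨l, hl⟩ := exists_vecMul_le_of_dotProduct_nonneg _ hu₀ hVu₀ fun u hVu hu =>
    dotProduct_nonneg_of_mem_coneW hw ⟨hVu, hu⟩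
  refine ⟨w - l ᵥ* V.map Int.cast, fun i => sub_nonneg.mpr (hl i), ?_⟩
  have hshift := initialIdealW_add_eq (fun j i => V i j)
    (fun f hf d => weightedHomogeneousComponent_mem_toricIdeal K V hf d)
    (w' := l ᵥ* V.map Int.cast)
    (fun a b hab => by rw [wdeg_vecMul_map_intCast, wdeg_vecMul_map_intCast, hab])
    (w - l ᵥ* V.map Int.cast)
  rwa [sub_add_cancel] at hshift

/-- For every `w ∈ W` generic for `I_V` there is a nonnegative
weight vector `c ∈ ℝᵐ_{≥0}` such that `in_w(I_V) = in_c(I_V)`. -/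
theorem exists_nonneg_weight_same_initialIdeal
    (K : Type*) [Field K] [CharZero K]
    (n m : ℕ) (hnm : n < m) (V : Matrix (Fin n) (Fin m) ℤ)
    (hrank : V.rank = n)
    (hcomplete : ∀ b : Fin n → ℝ, ∃ u : Fin m → ℝ,
      (∀ i, 0 ≤ u i) ∧ (V.map (Int.cast : ℤ → ℝ)) *ᵥ u = b)
    (w : Fin m → ℝ) (hw : w ∈ coneW V)
    (hgeneric : IsMonomialIdeal (initialIdealW w (toricIdeal K V))) :
    ∃ c : Fin m → ℝ, (∀ i, 0 ≤ c i) ∧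
      initialIdealW w (toricIdeal K V) = initialIdealW c (toricIdeal K V) :=
  exists_nonneg_weight_same_initialIdeal_general K n m V hcomplete w hw
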